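/- If f is analytic and locally univalent on the unit disk D with f(z) = z + b z^2 + ..., |b| ≤ 1, and Re(√(f'(z))) > √((1+|b|)/8) for all z in D, then Re(f(z)/z) > 1/2 for all z in D, where √(f'(z)) denotes the analytic branch of the square root with √(f'(0)) = 1. -/

import Mathlib

/-!
Write `f z = z g z` with `g = dslope f 0`, so that `g 0 = 1` and `g' 0 = b`. If `Re g ≤ 1/2`
somewhere, let `z₁` be a point of least modulus `r` where `Re g z₁ = 1/2`. Then
`ψ = (1 - g) / g` maps the disc of radius `r` into the closed unit disc, `ψ 0 = 0`,
`ψ' 0 = -b` and `‖ψ z₁‖ = 1`. Jack's lemma, applied to the Blaschke transform of `r ψ(z) / z`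
that vanishes at `0`, gives `z₁ ψ'(z₁) = κ ψ(z₁)` with `κ` real and `κ ≥ 2 / (1 + r ‖b‖)`.
With `w = g z₁` this reads `f'(z₁) = w - κ ‖w‖²` where `Re w = 1/2`, and squaring
`√f'(z₁) = x + i y` forces `x² ≤ 1 / (4κ) ≤ (1 + ‖b‖) / 8`.
-/

open Complex Metric Set Filter Topology ComplexConjugate

theorem exists_apply_eq_and_lt_on_ball_norm {E : Type*} [NormedAddCommGroup E]
    [NormedSpace ℝ E] [ProperSpace E] {φ : E → ℝ} {R c : ℝ} {z : E}
    (hφ : ContinuousOn φ (ball 0 R)) (h0 : c < φ 0) (hz : z ∈ ball 0 R) (hzc : φ z ≤ c) :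
    ∃ z₁ ∈ ball (0 : E) R, φ z₁ = c ∧ ∀ y ∈ ball (0 : E) ‖z₁‖, c < φ y := by
  have hsub : closedBall (0 : E) ‖z‖ ⊆ ball 0 R := closedBall_subset_ball (mem_ball_zero_iff.1 hz)
  set S := closedBall (0 : E) ‖z‖ ∩ φ ⁻¹' Iic c
  have hS : IsCompact S := (isCompact_closedBall _ _).of_isClosed_subset
    ((hφ.mono hsub).preimage_isClosed_of_isClosed isClosed_closedBall isClosed_Iic)
    inter_subset_left
  obtain ⟨z₁, ⟨hz₁z, hz₁c⟩, hmin⟩ :=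
    hS.exists_isMinOn ⟨z, mem_closedBall_zero_iff.2 le_rfl, hzc⟩ continuous_norm.continuousOn
  have hlt : ∀ y ∈ ball (0 : E) ‖z₁‖, c < φ y := fun y hy => by
    by_contra! hyc
    rw [mem_ball_zero_iff] at hy
    have hyS : y ∈ S := ⟨mem_closedBall_zero_iff.2 (hy.le.trans (mem_closedBall_zero_iff.1 hz₁z)),
      hyc⟩
    exact (hmin hyS).not_gt hy
  have hz₁0 : z₁ ≠ 0 := by
    rintro rfl
    exact (h0.trans_le hz₁c).false
  have hz₁R := hsub hz₁z
  refine ⟨z₁, hz₁R, le_antisymm hz₁c ?_, hlt⟩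
  have hcl : z₁ ∈ closure (ball (0 : E) ‖z₁‖) := by
    rw [closure_ball _ (norm_ne_zero_iff.2 hz₁0)]
    exact mem_closedBall_zero_iff.2 le_rfl
  exact ContinuousWithinAt.closure_le hcl continuousWithinAt_const
    (hφ.continuousAt (isOpen_ball.mem_nhds hz₁R)).continuousWithinAt fun y hy => (hlt y hy).le

theorem deriv_deriv_eq_two_smul_deriv_dslope {𝕜 E : Type*} [NontriviallyNormedField 𝕜]
    [NormedAddCommGroup E] [NormedSpace 𝕜 E] [CompleteSpace E] {f : 𝕜 → E} {c : 𝕜}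
    (hf : AnalyticAt 𝕜 f c) : deriv (deriv f) c = (2 : 𝕜) • deriv (dslope f c) c := by
  set g := dslope f c
  have hg : AnalyticAt 𝕜 g c := by
    obtain ⟨p, hp⟩ := hf
    exact ⟨_, hp.has_fpower_series_dslope_fslope⟩
  have hfg : f = fun z => f c + (z - c) • g z := funext fun z => by
    rw [sub_smul_dslope, add_sub_cancel]
  have hderiv : deriv f =ᶠ[𝓝 c] fun z => g z + (z - c) • deriv g z := by
    filter_upwards [hg.eventually_analyticAt] with z hz
    rw [hfg]
    refine ((((hasDerivAt_id' z).sub_const c).smul hz.differentiableAt.hasDerivAt).const_add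
      (f c)).deriv.trans ?_
    simp [add_comm]
  rw [hderiv.deriv_eq]
  refine ((hg.differentiableAt.hasDerivAt.add (((hasDerivAt_id' c).sub_const c).smul
    hg.deriv.differentiableAt.hasDerivAt))).deriv.trans ?_
  simp [two_smul]

theorem HasDerivAt.nonpos_of_eventually_le {φ : ℝ → ℝ} {D x : ℝ} (h : HasDerivAt φ D x)
    (hle : ∀ᶠ t in 𝓝[>] x, φ t ≤ φ x) : D ≤ 0 := by
  refine le_of_tendsto ((hasDerivAt_iff_tendsto_slope.mp h).mono_left
    (nhdsGT_le_nhdsNE x)) ?_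
  filter_upwards [hle, self_mem_nhdsWithin] with t ht htx
  rw [slope_def_field]
  exact div_nonpos_of_nonpos_of_nonneg (sub_nonpos.2 ht) (sub_nonneg.2 (le_of_lt htx))

theorem eventually_norm_one_add_mul_lt_one {c : ℂ} (hc : c.re < 0) :
    ∀ᶠ t : ℝ in 𝓝[>] 0, ‖1 + t * c‖ < 1 := by
  have hc0 : 0 < normSq c := normSq_pos.2 fun h => by simp [h] at hc
  filter_upwards [Ioo_mem_nhdsGT (div_pos (by linarith : 0 < -2 * c.re) hc0)] with t ht
  rw [← sq_lt_one_iff₀ (norm_nonneg _), ← normSq_eq_norm_sq]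
  have h1 : t * normSq c < -2 * c.re := (lt_div_iff₀ hc0).1 ht.2
  have h2 : normSq (1 + t * c) = 1 + t * (2 * c.re + t * normSq c) := by
    simp only [normSq_apply, add_re, add_im, one_re, one_im, mul_re, mul_im, ofReal_re, ofReal_im]
    ring
  rw [h2]
  nlinarith [ht.1]

noncomputable def blaschkeFactor (α z : ℂ) : ℂ := (z - α) / (1 - conj α * z)

theorem normSq_one_sub_conj_mul_sub_normSq_sub (α z : ℂ) :
    normSq (1 - conj α * z) - normSq (z - α) = (1 - normSq α) * (1 - normSq z) := by
  simp only [normSq_apply, sub_re, sub_im, one_re, one_im, mul_re, mul_im, conj_re, conj_im]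
  ring

section Blaschke

variable {α z : ℂ}

theorem one_sub_conj_mul_ne_zero (hα : ‖α‖ < 1) (hz : ‖z‖ ≤ 1) : 1 - conj α * z ≠ 0 := by
  rw [sub_ne_zero]
  intro h
  have : ‖conj α * z‖ < 1 := by
    rw [norm_mul, RCLike.norm_conj]
    nlinarith [norm_nonneg α, norm_nonneg z]
  rw [← h, norm_one] at this
  exact this.false

@[simp]
theorem blaschkeFactor_self (α : ℂ) : blaschkeFactor α α = 0 := by
  simp [blaschkeFactor]

theorem norm_blaschkeFactor_le_one (hα : ‖α‖ < 1) (hz : ‖z‖ ≤ 1) : ‖blaschkeFactor α z‖ ≤ 1 := by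
  have hden := one_sub_conj_mul_ne_zero hα hz
  rw [blaschkeFactor, norm_div, div_le_one (norm_pos_iff.mpr hden), ← sq_le_sq₀ (norm_nonneg _)
    (norm_nonneg _), ← normSq_eq_norm_sq, ← normSq_eq_norm_sq, ← sub_nonneg,
    normSq_one_sub_conj_mul_sub_normSq_sub, normSq_eq_norm_sq, normSq_eq_norm_sq]
  apply mul_nonneg <;> nlinarith [norm_nonneg α, norm_nonneg z]

theorem norm_blaschkeFactor_eq_one (hα : ‖α‖ < 1) (hz : ‖z‖ = 1) : ‖blaschkeFactor α z‖ = 1 := by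
  have hden := one_sub_conj_mul_ne_zero hα hz.le
  rw [blaschkeFactor, norm_div, div_eq_one_iff_eq (norm_ne_zero_iff.mpr hden), ← sq_eq_sq₀
    (norm_nonneg _) (norm_nonneg _), ← normSq_eq_norm_sq, ← normSq_eq_norm_sq, eq_comm,
    ← sub_eq_zero, normSq_one_sub_conj_mul_sub_normSq_sub, normSq_eq_norm_sq z, hz]
  ring

theorem hasDerivAt_blaschkeFactor (h : 1 - conj α * z ≠ 0) :
    HasDerivAt (blaschkeFactor α) ((1 - conj α * α) / (1 - conj α * z) ^ 2) z := by
  refine (((hasDerivAt_id' z).sub_const α).div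
    (((hasDerivAt_id' z).const_mul (conj α)).const_sub 1) h).congr_deriv ?_
  ring

end Blaschke

/-- Along `t ↦ z₀ (1 + t c)`, which enters the disc `ball 0 ‖z₀‖` when `Re c < 0`, the function
`‖v‖² - ‖· / z₀‖²` is nonpositive and vanishes at `t = 0`; this bounds its derivative there. -/
theorem re_mul_nonpos_of_norm_le_div {v : ℂ → ℂ} {d z₀ c : ℂ} (hv : HasDerivAt v d z₀)
    (hz₀ : z₀ ≠ 0) (hv₀ : ‖v z₀‖ = 1) (hle : ∀ z ∈ ball (0 : ℂ) ‖z₀‖, ‖v z‖ ≤ ‖z‖ / ‖z₀‖)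
    (hc : c.re < 0) : ((conj (v z₀) * (z₀ * d) - 1) * c).re ≤ 0 := by
  have hline : HasDerivAt (fun t : ℝ => 1 + (t : ℂ) * c) c 0 := by
    simpa using ((hasDerivAt_id (0 : ℝ)).ofReal_comp.mul_const c).const_add 1
  have hcurve : HasDerivAt (fun t : ℝ => v (z₀ * (1 + t * c))) (d * (z₀ * c)) 0 := by
    have hv' : HasDerivAt v d (z₀ * (1 + ((0 : ℝ) : ℂ) * c)) := by simpa using hv
    exact hv'.comp (0 : ℝ) (hline.const_mul z₀)
  have hφ := hcurve.norm_sq.sub hline.norm_sq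
  simp only [ofReal_zero, zero_mul, add_zero, mul_one, Complex.inner] at hφ
  have key := hφ.nonpos_of_eventually_le ?_
  · have : ((conj (v z₀) * (z₀ * d) - 1) * c).re
        = (d * (z₀ * c) * conj (v z₀)).re - (c * conj 1).re := by
      rw [sub_mul, one_mul, sub_re, map_one, mul_one]
      ring_nf
    linarith
  · filter_upwards [eventually_norm_one_add_mul_lt_one hc] with t ht
    have hz₀pos : 0 < ‖z₀‖ := norm_pos_iff.2 hz₀
    have hmem : z₀ * (1 + t * c) ∈ ball (0 : ℂ) ‖z₀‖ := by
      rw [mem_ball_zero_iff, norm_mul]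
      exact mul_lt_of_lt_one_right hz₀pos ht
    have hbound := hle _ hmem
    rw [norm_mul, mul_div_cancel_left₀ _ hz₀pos.ne'] at hbound
    simp only [Pi.sub_apply, ofReal_zero, zero_mul, add_zero, mul_one, hv₀, norm_one]
    nlinarith [norm_nonneg (v (z₀ * (1 + t * c)))]

theorem jack_lemma {v : ℂ → ℂ} {d z₀ : ℂ} {r : ℝ} (hv : DifferentiableOn ℂ v (ball 0 r))
    (hmaps : MapsTo v (ball 0 r) (closedBall 0 1)) (hv0 : v 0 = 0) (hz₀ : ‖z₀‖ = r)
    (hv₀ : ‖v z₀‖ = 1) (hd : HasDerivAt v d z₀) : ∃ k : ℝ, 1 ≤ k ∧ z₀ * d = k * v z₀ := by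
  have hz₀0 : z₀ ≠ 0 := by
    rintro rfl
    simp [hv0] at hv₀
  subst hz₀
  have hle : ∀ z ∈ ball (0 : ℂ) ‖z₀‖, ‖v z‖ ≤ ‖z‖ / ‖z₀‖ := fun z hz =>
    calc ‖v z‖ = dist (v z) (v 0) := by rw [hv0, dist_zero_right]
      _ ≤ 1 / ‖z₀‖ * dist z 0 :=
        Complex.dist_le_div_mul_dist_of_mapsTo_ball hv (by rwa [hv0]) hz
      _ = ‖z‖ / ‖z₀‖ := by rw [dist_zero_right]; ring
  set K := conj (v z₀) * (z₀ * d) with hK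
  have key : ∀ c : ℂ, c.re < 0 → ((K - 1) * c).re ≤ 0 := fun c hc =>
    re_mul_nonpos_of_norm_le_div hd hz₀0 hv₀ hle hc
  clear_value K
  have hre : 1 ≤ K.re := by
    have := key (-1) (by simp)
    simp only [mul_neg, mul_one, neg_re, sub_re, one_re] at this
    linarith
  have him : K.im = 0 := by
    by_contra hne
    -- chosen so that `Re ((K - 1) c) = K.im ^ 2`
    have := key ⟨-K.im ^ 2, -(K.re * K.im)⟩ (by simpa using sq_pos_of_ne_zero hne)
    simp only [mul_re, sub_re, sub_im, one_re, one_im, sub_zero] at this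
    nlinarith [sq_pos_of_ne_zero hne]
  refine ⟨K.re, hre, ?_⟩
  have hconj : conj (v z₀) * v z₀ = 1 := by
    rw [mul_comm, mul_conj, normSq_eq_norm_sq, hv₀]
    norm_num
  rw [show (K.re : ℂ) = K from Complex.ext (by simp) (by simp [him]), hK]
  linear_combination (z₀ * d) * hconj.symm

theorem jack_lemma_of_norm_lt_one {u : ℂ → ℂ} {d z₀ : ℂ} {r : ℝ}
    (hu : DifferentiableOn ℂ u (ball 0 r)) (hmaps : MapsTo u (ball 0 r) (closedBall 0 1))
    (hu0 : ‖u 0‖ < 1) (hz₀ : ‖z₀‖ = r) (hu₀ : ‖u z₀‖ = 1) (hd : HasDerivAt u d z₀) :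
    ∃ m : ℝ, (1 - ‖u 0‖) / (1 + ‖u 0‖) ≤ m ∧ z₀ * d = m * u z₀ := by
  set α := u 0
  have hden : ∀ z ∈ ball (0 : ℂ) r, 1 - conj α * u z ≠ 0 := fun z hz =>
    one_sub_conj_mul_ne_zero hu0 (by simpa using hmaps hz)
  have hden₀ : 1 - conj α * u z₀ ≠ 0 := one_sub_conj_mul_ne_zero hu0 hu₀.le
  obtain ⟨k, hk, hjack⟩ := jack_lemma (v := blaschkeFactor α ∘ u)
    (fun z hz => (hasDerivAt_blaschkeFactor (hden z hz)).differentiableAt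
      |>.comp_differentiableWithinAt z (hu z hz))
    (fun z hz => by simpa using norm_blaschkeFactor_le_one hu0 (by simpa using hmaps hz))
    (by simp [α]) hz₀ (norm_blaschkeFactor_eq_one hu0 hu₀)
    ((hasDerivAt_blaschkeFactor hden₀).comp z₀ hd)
  set u₁ := u z₀
  have hu₁ : u₁ * conj u₁ = 1 := by
    rw [mul_conj, normSq_eq_norm_sq, hu₀]; norm_num
  have hnα : (1 : ℝ) - ‖α‖ ^ 2 ≠ 0 := by nlinarith [norm_nonneg α]
  have hfactor : 1 - conj α * u₁ = u₁ * conj (u₁ - α) := by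
    rw [map_sub]; linear_combination -hu₁
  have hsolve : z₀ * d * (1 - ‖α‖ ^ 2 : ℝ) = (k * ‖u₁ - α‖ ^ 2 : ℝ) * u₁ := by
    have hjack' : z₀ * ((1 - conj α * α) / (1 - conj α * u₁) ^ 2 * d)
        = k * ((u₁ - α) / (1 - conj α * u₁)) := hjack
    field_simp at hjack'
    rw [hfactor] at hjack'
    have hconjα : conj α * α = ((‖α‖ ^ 2 : ℝ) : ℂ) := by
      rw [mul_comm, mul_conj, normSq_eq_norm_sq]
    have hconjd : (u₁ - α) * conj (u₁ - α) = ((‖u₁ - α‖ ^ 2 : ℝ) : ℂ) := by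
      rw [mul_conj, normSq_eq_norm_sq]
    rw [hconjα] at hjack'
    push_cast at hjack' hconjd ⊢
    linear_combination hjack' + k * u₁ * hconjd
  refine ⟨k * ‖u₁ - α‖ ^ 2 / (1 - ‖α‖ ^ 2), ?_, ?_⟩
  · have hdist : 1 - ‖α‖ ≤ ‖u₁ - α‖ := by
      simpa [hu₀] using norm_sub_norm_le u₁ α
    rw [div_le_div_iff₀ (by positivity) (by nlinarith [norm_nonneg α])]
    have h1 : 0 < 1 - ‖α‖ := by linarith
    have hsq : (1 - ‖α‖) ^ 2 ≤ ‖u₁ - α‖ ^ 2 := pow_le_pow_left₀ h1.le hdist 2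
    nlinarith [mul_nonneg (mul_nonneg (sub_nonneg.2 hk) (sq_nonneg ‖u₁ - α‖))
      (by positivity : (0 : ℝ) ≤ 1 + ‖α‖), mul_le_mul_of_nonneg_right hsq
      (by positivity : (0 : ℝ) ≤ 1 + ‖α‖)]
  · rw [ofReal_div, div_mul_eq_mul_div, eq_div_iff (by exact_mod_cast hnα), hsolve]

theorem jack_lemma_sharp {ψ : ℂ → ℂ} {d z₀ : ℂ} {r : ℝ}
    (hψ : DifferentiableOn ℂ ψ (ball 0 r)) (hmaps : MapsTo ψ (ball 0 r) (closedBall 0 1))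
    (hψ0 : ψ 0 = 0) (hz₀ : ‖z₀‖ = r) (hψ₀ : ‖ψ z₀‖ = 1) (hd : HasDerivAt ψ d z₀)
    (hψ' : r * ‖deriv ψ 0‖ < 1) :
    ∃ κ : ℝ, 2 / (1 + r * ‖deriv ψ 0‖) ≤ κ ∧ z₀ * d = κ * ψ z₀ := by
  have hz₀0 : z₀ ≠ 0 := by
    rintro rfl
    simp [hψ0] at hψ₀
  have hr : 0 < r := hz₀ ▸ norm_pos_iff.2 hz₀0
  have hrC : (r : ℂ) ≠ 0 := ofReal_ne_zero.2 hr.ne'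
  set u : ℂ → ℂ := fun z => r * dslope ψ 0 z
  have hψu : ∀ z, ψ z = z * u z / r := fun z => by
    rw [← sub_smul_dslope_of_zero hψ0 z, sub_zero, smul_eq_mul]
    field_simp [u]
    ring
  have hu0 : ‖u 0‖ = r * ‖deriv ψ 0‖ := by
    simp [u, dslope_same, abs_of_pos hr]
  have hu : DifferentiableOn ℂ u (ball 0 r) :=
    ((differentiableOn_dslope (ball_mem_nhds 0 hr)).2 hψ).const_mul _
  have humaps : MapsTo u (ball 0 r) (closedBall 0 1) := fun z hz => by
    have := Complex.norm_dslope_le_div_of_mapsTo_ball hψ (by rwa [hψ0]) hz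
    rw [mem_closedBall_zero_iff, norm_mul, norm_real, Real.norm_of_nonneg hr.le]
    calc r * ‖dslope ψ 0 z‖ ≤ r * (1 / r) := by gcongr
      _ = 1 := by field_simp
  have hu₀ : ‖u z₀‖ = 1 := by
    rw [hψu, norm_div, norm_mul, hz₀, norm_real, Real.norm_of_nonneg hr.le] at hψ₀
    field_simp at hψ₀
    exact hψ₀
  have hud : HasDerivAt u (deriv u z₀) z₀ :=
    (((differentiableAt_dslope_of_ne hz₀0).2 hd.differentiableAt).const_mul _).hasDerivAt
  obtain ⟨m, hm, hzu⟩ := jack_lemma_of_norm_lt_one hu humaps (hu0 ▸ hψ') hz₀ hu₀ hud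
  have hdu : d = (u z₀ + z₀ * deriv u z₀) / r := by
    have hprod := ((hasDerivAt_id' z₀).mul hud).div_const (r : ℂ)
    rw [one_mul] at hprod
    rw [show ψ = fun z => z * u z / r from funext hψu] at hd
    exact hd.unique hprod
  refine ⟨1 + m, ?_, ?_⟩
  · rw [hu0] at hm
    calc 2 / (1 + r * ‖deriv ψ 0‖)
        = 1 + (1 - r * ‖deriv ψ 0‖) / (1 + r * ‖deriv ψ 0‖) := by
          field_simp
          ring
      _ ≤ 1 + m := by linarith
  · rw [hdu, hψu, mul_div_assoc', mul_add, hzu]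
    push_cast
    ring

theorem normSq_one_sub (w : ℂ) : normSq (1 - w) = normSq w - 2 * w.re + 1 := by
  simp only [normSq_apply, sub_re, sub_im, one_re, one_im]
  ring

theorem jack_lemma_re_gt_half {g : ℂ → ℂ} {g' z₀ : ℂ} {r : ℝ}
    (hg : DifferentiableOn ℂ g (ball 0 r)) (hg0 : g 0 = 1)
    (hre : ∀ z ∈ ball (0 : ℂ) r, 1 / 2 < (g z).re) (hz₀ : ‖z₀‖ = r) (hre₀ : (g z₀).re = 1 / 2)
    (hd : HasDerivAt g g' z₀) (hg' : r * ‖deriv g 0‖ < 1) :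
    ∃ κ : ℝ, 2 / (1 + r * ‖deriv g 0‖) ≤ κ ∧ z₀ * g' = -κ * g z₀ * (1 - g z₀) := by
  have hne : ∀ {w : ℂ}, 1 / 2 ≤ w.re → w ≠ 0 := fun hw h => by
    rw [h, zero_re] at hw
    linarith
  have hr : 0 < r := by
    rcases (hz₀ ▸ norm_nonneg z₀).lt_or_eq with h | h
    · exact h
    · rw [← h, norm_eq_zero] at hz₀
      rw [hz₀, hg0, one_re] at hre₀
      norm_num at hre₀
  set ψ : ℂ → ℂ := fun z => (1 - g z) / g z
  have hψ : DifferentiableOn ℂ ψ (ball 0 r) :=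
    ((differentiableOn_const 1).sub hg).div hg fun z hz => hne (hre z hz).le
  have hψmaps : MapsTo ψ (ball 0 r) (closedBall 0 1) := fun z hz => by
    have hgz := hne (hre z hz).le
    rw [mem_closedBall_zero_iff, norm_div, div_le_one (norm_pos_iff.2 hgz),
      ← sq_le_sq₀ (norm_nonneg _) (norm_nonneg _), ← normSq_eq_norm_sq, ← normSq_eq_norm_sq,
      normSq_one_sub]
    linarith [hre z hz]
  have hψ₀ : ‖ψ z₀‖ = 1 := by
    rw [norm_div, div_eq_one_iff_eq (norm_ne_zero_iff.2 (hne hre₀.ge)),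
      ← sq_eq_sq₀ (norm_nonneg _) (norm_nonneg _), ← normSq_eq_norm_sq, ← normSq_eq_norm_sq,
      normSq_one_sub, hre₀]
    ring
  have hgz₀ := hne hre₀.ge
  have hψd : HasDerivAt ψ (-g' / g z₀ ^ 2) z₀ :=
    (((hasDerivAt_const z₀ 1).sub hd).div hd hgz₀).congr_deriv <| by
      simp only [Pi.sub_apply]
      field_simp
      ring
  have hψ'0 : deriv ψ 0 = -deriv g 0 := by
    have hg0d := (hg.differentiableAt (ball_mem_nhds 0 hr)).hasDerivAt
    refine (((hasDerivAt_const 0 1).sub hg0d).div hg0d (by simp [hg0])).deriv.trans ?_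
    simp [hg0]
  obtain ⟨κ, hκ, hzψ⟩ := jack_lemma_sharp hψ hψmaps (by simp [ψ, hg0]) hz₀ hψ₀ hψd
    (by rwa [hψ'0, norm_neg])
  rw [hψ'0, norm_neg] at hκ
  refine ⟨κ, hκ, ?_⟩
  simp only [ψ] at hzψ
  field_simp at hzψ
  linear_combination -hzψ

theorem four_mul_re_sq_le_one {p w : ℂ} {κ : ℝ} (hκ : 0 < κ) (hw : w.re = 1 / 2)
    (hp : p ^ 2 = w - κ * w * (1 - w)) : 4 * κ * p.re ^ 2 ≤ 1 := by
  have hre := congrArg re hp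
  have him := congrArg im hp
  simp only [sq, mul_re, mul_im, sub_re, sub_im, ofReal_re, ofReal_im, one_re, one_im, hw]
    at hre him
  have hy : w.im = 2 * p.re * p.im := by linarith
  rw [hy] at hre
  by_contra! h
  have hcross : 0 ≤ p.im ^ 2 * (4 * κ * p.re ^ 2 - 1) := mul_nonneg (sq_nonneg _) (by linarith)
  have hx : p.re ^ 2 ≤ 1 / 2 - κ / 4 := by nlinarith
  nlinarith [mul_le_mul_of_nonneg_left hx (by positivity : (0 : ℝ) ≤ 4 * κ), sq_nonneg (κ - 1)]

theorem stmt_3_general (f p : ℂ → ℂ) (b : ℂ)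
    (hf : AnalyticOn ℂ f (ball 0 1))
    (hf0 : f 0 = 0) (hf1 : deriv f 0 = 1)
    (hfb : deriv (deriv f) 0 = 2 * b)
    (hb : ‖b‖ ≤ 1)
    (hpsq : ∀ z ∈ ball (0 : ℂ) 1, (p z) ^ 2 = deriv f z)
    (hre : ∀ z ∈ ball (0 : ℂ) 1,
      (p z).re > Real.sqrt ((1 + ‖b‖) / 8)) :
    ∀ z ∈ ball (0 : ℂ) 1, z ≠ 0 → (f z / z).re > 1 / 2 := by
  intro z hz hz0
  set g := dslope f 0
  have hfg : ∀ z, f z = z * g z := fun z => by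
    rw [← sub_smul_dslope_of_zero hf0 z, sub_zero, smul_eq_mul]
  have hg : DifferentiableOn ℂ g (ball 0 1) :=
    (differentiableOn_dslope (ball_mem_nhds 0 one_pos)).2 hf.differentiableOn
  have hg0 : g 0 = 1 := (dslope_same f 0).trans hf1
  have hgb : deriv g 0 = b := by
    have := deriv_deriv_eq_two_smul_deriv_dslope
      ((isOpen_ball.analyticOn_iff_analyticOnNhd.1 hf) 0 (mem_ball_self one_pos))
    rw [hfb, smul_eq_mul] at this
    exact (mul_left_cancel₀ two_ne_zero this).symm
  rw [hfg, mul_div_cancel_left₀ _ hz0]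
  by_contra! hle
  obtain ⟨z₁, hz₁, hre₁, hlt⟩ := exists_apply_eq_and_lt_on_ball_norm (φ := fun z => (g z).re)
    (continuous_re.comp_continuousOn hg.continuousOn) (by norm_num [hg0]) hz hle
  have hz₁1 : ‖z₁‖ < 1 := mem_ball_zero_iff.1 hz₁
  have hgz₁ : HasDerivAt g (deriv g z₁) z₁ :=
    (hg.differentiableAt (isOpen_ball.mem_nhds hz₁)).hasDerivAt
  obtain ⟨κ, hκ, hz₁g⟩ := jack_lemma_re_gt_half (hg.mono (ball_subset_ball hz₁1.le)) hg0 hlt rfl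
    hre₁ hgz₁ (by rw [hgb]; nlinarith [norm_nonneg b, norm_nonneg z₁])
  have hf'z₁ : deriv f z₁ = g z₁ + z₁ * deriv g z₁ := by
    rw [show f = fun z => z * g z from funext hfg]
    exact ((hasDerivAt_id' z₁).mul hgz₁).deriv.trans (by ring)
  rw [hgb] at hκ
  have hκ0 : 0 < κ := lt_of_lt_of_le (by positivity) hκ
  have hpκ := four_mul_re_sq_le_one hκ0 hre₁ (by rw [hpsq z₁ hz₁, hf'z₁, hz₁g]; ring)
  have hκ2 : 2 ≤ κ * (1 + ‖z₁‖ * ‖b‖) := (div_le_iff₀ (by positivity)).1 hκ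
  have hp₁ : (1 + ‖b‖) / 8 < (p z₁).re ^ 2 :=
    (Real.sqrt_lt' ((Real.sqrt_nonneg _).trans_lt (hre z₁ hz₁))).1 (hre z₁ hz₁)
  nlinarith [mul_le_mul_of_nonneg_left hz₁1.le (norm_nonneg b), sq_nonneg (p z₁).re]

/-- If `f(z) = z + b z² + ⋯` is analytic and locally univalent on the unit disk,
`|b| ≤ 1`, and `Re √(f'(z)) > √((1+|b|)/8)` on the disk (where `√(f')` is the
analytic branch `p` with `p² = f'` and `p(0) = 1`), then `Re(f(z)/z) > 1/2`. -/
theorem stmt_3 (f p : ℂ → ℂ) (b : ℂ)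
    (hf : AnalyticOn ℂ f (ball 0 1))
    (hf0 : f 0 = 0) (hf1 : deriv f 0 = 1)
    (hfb : deriv (deriv f) 0 = 2 * b)
    (hb : ‖b‖ ≤ 1)
    (hf' : ∀ z ∈ ball (0 : ℂ) 1, deriv f z ≠ 0)
    (hp : AnalyticOn ℂ p (ball 0 1))
    (hp0 : p 0 = 1)
    (hpsq : ∀ z ∈ ball (0 : ℂ) 1, (p z) ^ 2 = deriv f z)
    (hre : ∀ z ∈ ball (0 : ℂ) 1,
      (p z).re > Real.sqrt ((1 + ‖b‖) / 8)) :
    ∀ z ∈ ball (0 : ℂ) 1, z ≠ 0 → (f z / z).re > 1 / 2 :=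
  stmt_3_general f p b hf hf0 hf1 hfb hb hpsq hre
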